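/- arXiv:1912.04539 — 4 statements merged into one kernel-verified Lean document; each statement's English description precedes it below -/
import Mathlib

section
/- Let U, V, W, X, Y, Z be finite-dimensional ℂ-vector spaces with linear maps α : V → W, β : V → U, γ : W → Y, δ : U → Y, φ : U → X, ρ : X → Z, η : Y → Z. If both sequences 0 → V →(α,β) W ⊕ U →(γ,−δ) Y → 0 and 0 → U →(φ,δ) X ⊕ Y →(ρ,η) Z → 0 are short exact, then the sequence 0 → V →(α, φβ, δβ) W ⊕ X ⊕ Y →L Y ⊕ Z → 0 with L(w,x,y) = (γw − y, ρx + ηy) is also short exact. -/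
open LinearMap

/-!
Injectivity: the map `V → W × X × Y` is `(α, β)` followed by `id × (φ, δ)`.
Exactness in the middle is a two-step diagram chase: for `(w, x, y)` in the kernel of `L`,
`y = γ w` and `ρ x + η y = 0`, so `(x, y) = (φ u, δ u)` for some `u`; then `γ w = δ u`, so
`(w, u) = (α v, β v)` for some `v`. Surjectivity: given `(y₀, z₀)`, take `(x, y)` over `z₀`
and `(w, u)` over `y₀ + y`; then `(w, x + φ u, y + δ u)` maps to `(y₀, z₀)` because
`ρ ∘ φ + η ∘ δ = 0`.
-/

namespace LinearMap

variable {R V M N P : Type*} [Ring R]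
  [AddCommGroup V] [AddCommGroup M] [AddCommGroup N] [AddCommGroup P]
  [Module R V] [Module R M] [Module R N] [Module R P]
  (f : V →ₗ[R] M) (g : V →ₗ[R] N) (p : M →ₗ[R] P) (q : N →ₗ[R] P)

theorem exact_prod_add_iff :
    Function.Exact (f.prod g) (p.comp (fst R M N) + q.comp (snd R M N)) ↔
      ∀ a b, p a + q b = 0 ↔ ∃ v, f v = a ∧ g v = b := by
  simp [Function.Exact, Prod.forall, Prod.ext_iff]

theorem exact_prod_sub_iff :
    Function.Exact (f.prod g) (p.comp (fst R M N) - q.comp (snd R M N)) ↔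
      ∀ a b, p a - q b = 0 ↔ ∃ v, f v = a ∧ g v = b := by
  simp [Function.Exact, Prod.forall, Prod.ext_iff]

variable {f g} in
theorem injective_prod_comp {h : N →ₗ[R] P}
    (hfg : Function.Injective (f.prod g)) (hh : Function.Injective h) :
    Function.Injective (f.prod (h.comp g)) :=
  (Function.injective_id.prodMap hh).comp hfg

end LinearMap

section Glueing

variable {R U V W X Y Z : Type*} [Ring R]
  [AddCommGroup U] [AddCommGroup V] [AddCommGroup W]
  [AddCommGroup X] [AddCommGroup Y] [AddCommGroup Z]
  [Module R U] [Module R V] [Module R W] [Module R X] [Module R Y] [Module R Z]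
  (α : V →ₗ[R] W) (β : V →ₗ[R] U) (φ : U →ₗ[R] X) (δ : U →ₗ[R] Y)
  (γ : W →ₗ[R] Y) (ρ : X →ₗ[R] Z) (η : Y →ₗ[R] Z)

def glueIncl : V →ₗ[R] W × X × Y :=
  α.prod ((φ.comp β).prod (δ.comp β))

def glueMap : W × X × Y →ₗ[R] Y × Z :=
  (γ.comp (fst R W (X × Y)) - (snd R X Y).comp (snd R W (X × Y))).prod
    (ρ.comp ((fst R X Y).comp (snd R W (X × Y))) + η.comp ((snd R X Y).comp (snd R W (X × Y))))

@[simp]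
theorem glueIncl_apply (v : V) :
    glueIncl α β φ δ v = (α v, φ (β v), δ (β v)) :=
  rfl

@[simp]
theorem glueMap_apply (w : W) (x : X) (y : Y) :
    glueMap γ ρ η (w, x, y) = (γ w - y, ρ x + η y) :=
  rfl

variable {α β φ δ γ ρ η}

theorem injective_glueIncl (hαβ : Function.Injective (α.prod β))
    (hφδ : Function.Injective (φ.prod δ)) : Function.Injective (glueIncl α β φ δ) :=
  injective_prod_comp hαβ hφδ

theorem surjective_glueMap
    (hγδ : Function.Surjective (γ.comp (fst R W U) - δ.comp (snd R W U)))
    (hρη : Function.Surjective (ρ.comp (fst R X Y) + η.comp (snd R X Y)))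
    (hcomp : ∀ u, ρ (φ u) + η (δ u) = 0) :
    Function.Surjective (glueMap γ ρ η) := by
  rintro ⟨y₀, z₀⟩
  obtain ⟨⟨x, y⟩, hxy⟩ := hρη z₀
  obtain ⟨⟨w, u⟩, hwu⟩ := hγδ (y₀ + y)
  simp only [LinearMap.add_apply, LinearMap.sub_apply, comp_apply, fst_apply, snd_apply]
    at hxy hwu
  refine ⟨(w, x + φ u, y + δ u), ?_⟩
  rw [glueMap_apply, Prod.mk.injEq, map_add, map_add, ← hxy, sub_eq_iff_eq_add.mp hwu]
  constructor
  · abel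
  · rw [add_add_add_comm, hcomp u, add_zero]

theorem exact_glueIncl_glueMap
    (hαβ : Function.Exact (α.prod β) (γ.comp (fst R W U) - δ.comp (snd R W U)))
    (hφδ : Function.Exact (φ.prod δ) (ρ.comp (fst R X Y) + η.comp (snd R X Y))) :
    Function.Exact (glueIncl α β φ δ) (glueMap γ ρ η) := by
  rw [exact_prod_sub_iff] at hαβ
  rw [exact_prod_add_iff] at hφδ
  rintro ⟨w, x, y⟩
  simp only [glueMap_apply, Set.mem_range, glueIncl_apply, Prod.ext_iff]
  constructor
  · rintro ⟨hy, hxy⟩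
    obtain ⟨u, rfl, rfl⟩ := (hφδ x y).1 hxy
    obtain ⟨v, rfl, rfl⟩ := (hαβ w u).1 hy
    exact ⟨v, rfl, rfl, rfl⟩
  · rintro ⟨v, rfl, rfl, rfl⟩
    exact ⟨(hαβ _ _).2 ⟨v, rfl, rfl⟩, (hφδ _ _).2 ⟨β v, rfl, rfl⟩⟩

end Glueing

theorem glueing_short_exact_long_general
    (U V W X Y Z : Type)
    [AddCommGroup U] [Module ℂ U]
    [AddCommGroup V] [Module ℂ V]
    [AddCommGroup W] [Module ℂ W]
    [AddCommGroup X] [Module ℂ X]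
    [AddCommGroup Y] [Module ℂ Y]
    [AddCommGroup Z] [Module ℂ Z]
    (α : V →ₗ[ℂ] W) (β : V →ₗ[ℂ] U) (γ : W →ₗ[ℂ] Y) (δ : U →ₗ[ℂ] Y)
    (φ : U →ₗ[ℂ] X) (ρ : X →ₗ[ℂ] Z) (η : Y →ₗ[ℂ] Z)
    (f₁ : V →ₗ[ℂ] W × U) (hf₁ : f₁ = α.prod β)
    (f₂ : W × U →ₗ[ℂ] Y)
    (hf₂ : f₂ = γ.comp (LinearMap.fst ℂ W U) - δ.comp (LinearMap.snd ℂ W U))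
    (g₁ : U →ₗ[ℂ] X × Y) (hg₁ : g₁ = φ.prod δ)
    (g₂ : X × Y →ₗ[ℂ] Z)
    (hg₂ : g₂ = ρ.comp (LinearMap.fst ℂ X Y) + η.comp (LinearMap.snd ℂ X Y))
    (h₁ : V →ₗ[ℂ] W × X × Y) (hh₁ : h₁ = α.prod ((φ.comp β).prod (δ.comp β)))
    (L : W × X × Y →ₗ[ℂ] Y × Z)
    (hL : L =
      (γ.comp (LinearMap.fst ℂ W (X × Y)) -
        (LinearMap.snd ℂ X Y).comp (LinearMap.snd ℂ W (X × Y))).prod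
      (ρ.comp ((LinearMap.fst ℂ X Y).comp (LinearMap.snd ℂ W (X × Y))) +
        η.comp ((LinearMap.snd ℂ X Y).comp (LinearMap.snd ℂ W (X × Y)))))
    (hex₁ : Function.Injective f₁ ∧ Function.Surjective f₂ ∧
        LinearMap.range f₁ = LinearMap.ker f₂)
    (hex₂ : Function.Injective g₁ ∧ Function.Surjective g₂ ∧
        LinearMap.range g₁ = LinearMap.ker g₂) :
    Function.Injective h₁ ∧ Function.Surjective L ∧
      LinearMap.range h₁ = LinearMap.ker L := by
  subst hf₁ hf₂ hg₁ hg₂ hh₁ hL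
  obtain ⟨hf₁, hf₂, hf⟩ := hex₁
  obtain ⟨hg₁, hg₂, hg⟩ := hex₂
  have hf_exact := LinearMap.exact_iff.mpr hf.symm
  have hg_exact := LinearMap.exact_iff.mpr hg.symm
  have hcomp (u : U) : ρ (φ u) + η (δ u) = 0 :=
    ((exact_prod_add_iff φ δ ρ η).mp hg_exact _ _).mpr ⟨u, rfl, rfl⟩
  exact ⟨injective_glueIncl hf₁ hg₁, surjective_glueMap hf₂ hg₂ hcomp,
    (LinearMap.exact_iff.mp (exact_glueIncl_glueMap hf_exact hg_exact)).symm⟩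

/-- If `0 → V → W ⊕ U → Y → 0` and `0 → U → X ⊕ Y → Z → 0` are short exact, then
`0 → V → W ⊕ X ⊕ Y → Y ⊕ Z → 0`, with maps `v ↦ (αv, φβv, δβv)` and
`L(w,x,y) = (γw − y, ρx + ηy)`, is short exact. -/
theorem glueing_short_exact_long
    (U V W X Y Z : Type)
    [AddCommGroup U] [Module ℂ U] [FiniteDimensional ℂ U]
    [AddCommGroup V] [Module ℂ V] [FiniteDimensional ℂ V]
    [AddCommGroup W] [Module ℂ W] [FiniteDimensional ℂ W]
    [AddCommGroup X] [Module ℂ X] [FiniteDimensional ℂ X]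
    [AddCommGroup Y] [Module ℂ Y] [FiniteDimensional ℂ Y]
    [AddCommGroup Z] [Module ℂ Z] [FiniteDimensional ℂ Z]
    (α : V →ₗ[ℂ] W) (β : V →ₗ[ℂ] U) (γ : W →ₗ[ℂ] Y) (δ : U →ₗ[ℂ] Y)
    (φ : U →ₗ[ℂ] X) (ρ : X →ₗ[ℂ] Z) (η : Y →ₗ[ℂ] Z)
    (f₁ : V →ₗ[ℂ] W × U) (hf₁ : f₁ = α.prod β)
    (f₂ : W × U →ₗ[ℂ] Y)
    (hf₂ : f₂ = γ.comp (LinearMap.fst ℂ W U) - δ.comp (LinearMap.snd ℂ W U))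
    (g₁ : U →ₗ[ℂ] X × Y) (hg₁ : g₁ = φ.prod δ)
    (g₂ : X × Y →ₗ[ℂ] Z)
    (hg₂ : g₂ = ρ.comp (LinearMap.fst ℂ X Y) + η.comp (LinearMap.snd ℂ X Y))
    (h₁ : V →ₗ[ℂ] W × X × Y) (hh₁ : h₁ = α.prod ((φ.comp β).prod (δ.comp β)))
    (L : W × X × Y →ₗ[ℂ] Y × Z)
    (hL : L =
      (γ.comp (LinearMap.fst ℂ W (X × Y)) -
        (LinearMap.snd ℂ X Y).comp (LinearMap.snd ℂ W (X × Y))).prod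
      (ρ.comp ((LinearMap.fst ℂ X Y).comp (LinearMap.snd ℂ W (X × Y))) +
        η.comp ((LinearMap.snd ℂ X Y).comp (LinearMap.snd ℂ W (X × Y)))))
    (hex₁ : Function.Injective f₁ ∧ Function.Surjective f₂ ∧
        LinearMap.range f₁ = LinearMap.ker f₂)
    (hex₂ : Function.Injective g₁ ∧ Function.Surjective g₂ ∧
        LinearMap.range g₁ = LinearMap.ker g₂) :
    Function.Injective h₁ ∧ Function.Surjective L ∧
      LinearMap.range h₁ = LinearMap.ker L :=
  glueing_short_exact_long_general U V W X Y Z α β γ δ φ ρ η f₁ hf₁ f₂ hf₂ g₁ hg₁ g₂ hg₂ h₁ hh₁ L hL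
    hex₁ hex₂
end

section
/- Let 0 → V →a T →b V → 0 be a short exact sequence of finite-dimensional ℂ-vector spaces (so dim T = 2·dim V). Let Σ be a volume form (nonzero element of the top exterior power of the dual) on V and Ω one on T, and define the torsion of the sequence to be Ω evaluated on (a(v_1) ∧ … ∧ a(v_m)) ∧ (t_1 ∧ … ∧ t_m), where {v_i} is a Σ-standard basis of V and {t_j} ⊆ T satisfies b(t_j) = v_j. Then the torsion is well-defined: it does not depend on the choice of the Σ-standard basis {v_i} nor on the choice of lifts t_j with b(t_j) = v_j. -/
open Matrix

private theorem finSumFinEquiv_symm_addNat {m : ℕ} (k : Fin m) :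
    finSumFinEquiv.symm (k.addNat m) = (Sum.inr k : Fin m ⊕ Fin m) := by
  rw [← Fin.natAdd_eq_addNat]
  exact finSumFinEquiv_symm_apply_natAdd k

/-- The torsion of a short exact sequence `0 → V → T → V → 0` of spaces with volume
forms is well-defined: it does not depend on the choice of the `Σ`-standard basis of
`V` nor on the choice of the lifts along `b`. -/
theorem torsion_well_defined
    (V T : Type)
    [AddCommGroup V] [Module ℂ V] [FiniteDimensional ℂ V]
    [AddCommGroup T] [Module ℂ T] [FiniteDimensional ℂ T]
    (m : ℕ) (hV : Module.finrank ℂ V = m) (hT : Module.finrank ℂ T = 2 * m)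
    (a : V →ₗ[ℂ] T) (b : T →ₗ[ℂ] V)
    (ha : Function.Injective a) (hb : Function.Surjective b)
    (hab : LinearMap.range a = LinearMap.ker b)
    (Sf : AlternatingMap ℂ V ℂ (Fin m)) (hSf : Sf ≠ 0)
    (Om : AlternatingMap ℂ T ℂ (Fin (m + m))) (hOm : Om ≠ 0)
    (v v' : Module.Basis (Fin m) ℂ V) (hv : Sf ⇑v = 1) (hv' : Sf ⇑v' = 1)
    (t t' : Fin m → T) (ht : ∀ i, b (t i) = v i) (ht' : ∀ i, b (t' i) = v' i) :
    Om (fun i => Fin.addCases (fun j => a (v j)) t i) =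
      Om (fun i => Fin.addCases (fun j => a (v' j)) t' i) := by
  classical
  have hba : ∀ x : V, b (a x) = 0 := by
    intro x
    have : a x ∈ LinearMap.ker b := hab ▸ LinearMap.mem_range_self a x
    simpa using this
  set C : Matrix (Fin m) (Fin m) ℂ := v.toMatrix ⇑v' with hCdef
  have hv'eq : ∀ j, v' j = ∑ k, C k j • v k := fun j => (v.sum_toMatrix_smul_self ⇑v' j).symm
  -- det C = 1
  have hdetC : C.det = 1 := by
    have h1 : Sf ⇑v' = Sf ⇑v * v.det ⇑v' := by
      conv_lhs => rw [Sf.eq_smul_basis_det v]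
      simp
    rw [hv, hv', one_mul] at h1
    rw [← Module.Basis.det_apply, ← h1]
  -- lifts
  have hker : ∀ j, ∃ x : V, a x = t' j - ∑ k, C k j • t k := by
    intro j
    have hmem : t' j - ∑ k, C k j • t k ∈ LinearMap.range a := by
      rw [hab, LinearMap.mem_ker]
      rw [map_sub, map_sum, ht']
      simp only [_root_.map_smul, ht]
      rw [hv'eq j, sub_self]
    rwa [LinearMap.mem_range] at hmem
  choose w hw using hker
  set W : Matrix (Fin m) (Fin m) ℂ := v.toMatrix w with hWdef
  have hwsum : ∀ j, w j = ∑ k, W k j • v k := fun j => (v.sum_toMatrix_smul_self w j).symm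
  set M : Matrix (Fin (m + m)) (Fin (m + m)) ℂ :=
    Matrix.reindex finSumFinEquiv finSumFinEquiv (Matrix.fromBlocks C W 0 C) with hMdef
  have hdetM : M.det = 1 := by
    rw [hMdef, Matrix.det_reindex_self, Matrix.det_fromBlocks_zero₂₁, hdetC, one_mul]
  set u : Fin (m + m) → T := fun i => Fin.addCases (fun j => a (v j)) t i with hu
  set u' : Fin (m + m) → T := fun i => Fin.addCases (fun j => a (v' j)) t' i with hu'
  have hrel : ∀ j, u' j = ∑ k, M k j • u k := by
    intro j
    rw [Fin.sum_univ_add]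
    refine Fin.addCases (fun j0 => ?_) (fun j0 => ?_) j
    · have h2 : ∀ k : Fin m, M (Fin.castAdd m k) (Fin.castAdd m j0) = C k j0 := by
        intro k
        simp [hMdef, Matrix.reindex_apply, finSumFinEquiv_symm_apply_castAdd]
      have h3 : ∀ k : Fin m, M (Fin.natAdd m k) (Fin.castAdd m j0) = 0 := by
        intro k
        simp [hMdef, Matrix.reindex_apply, finSumFinEquiv_symm_apply_castAdd,
          finSumFinEquiv_symm_apply_natAdd, finSumFinEquiv_symm_addNat]
      simp only [hu, hu', Fin.addCases_left, Fin.addCases_right, h2, h3, zero_smul,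
        Finset.sum_const_zero, add_zero]
      rw [hv'eq j0, map_sum]
      simp [_root_.map_smul]
    · have h2 : ∀ k : Fin m, M (Fin.castAdd m k) (Fin.natAdd m j0) = W k j0 := by
        intro k
        simp [hMdef, Matrix.reindex_apply, finSumFinEquiv_symm_apply_castAdd,
          finSumFinEquiv_symm_apply_natAdd, finSumFinEquiv_symm_addNat]
      have h3 : ∀ k : Fin m, M (Fin.natAdd m k) (Fin.natAdd m j0) = C k j0 := by
        intro k
        simp [hMdef, Matrix.reindex_apply, finSumFinEquiv_symm_apply_natAdd, finSumFinEquiv_symm_addNat]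
      simp only [hu, hu', Fin.addCases_left, Fin.addCases_right, h2, h3]
      have h4 : ∑ k, W k j0 • a (v k) = a (w j0) := by
        rw [hwsum j0, map_sum]; simp [_root_.map_smul]
      rw [h4, hw j0]
      abel
  -- a basis of T indexed by Fin (m+m)
  let E : Module.Basis (Fin (m + m)) ℂ T :=
    (Module.finBasis ℂ T).reindex (finCongr (by rw [hT, two_mul]))
  have hmat : E.toMatrix u' = E.toMatrix u * M := by
    ext i j
    rw [Matrix.mul_apply]
    simp only [Module.Basis.toMatrix_apply]
    rw [hrel j, map_sum]
    simp [mul_comm]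
  have hOmE : Om = Om ⇑E • E.det := Om.eq_smul_basis_det E
  have : Om u' = Om u := by
    rw [hOmE]
    simp only [AlternatingMap.smul_apply, smul_eq_mul]
    rw [Module.Basis.det_apply, Module.Basis.det_apply, hmat, Matrix.det_mul, hdetM, mul_one]
  exact this.symm
end

section
/- Let 0 → V →a' T →b V → 0 be a short exact sequence of finite-dimensional ℂ-vector spaces with volume forms, of torsion 1, and suppose there exist maps a : V → T, b' : T → V with b∘a = λ·id_V and b'∘a' = −λ·id_V for some λ ≠ 0, and that 0 → V →a T →b' V → 0 is a complex which is exact. If dim V = m, then the torsion of the sequence 0 → V →a T →b' V → 0 equals 1 as well. (Key identity: (∧_i a'(x_i)) ∧ (∧_i a(x_i/λ)) = (∧_i a(x_i)) ∧ (∧_i a'(−x_i/λ)) in the top exterior power of T, using that m² + m is even.) -/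
section Aux

variable {m : ℕ}

private lemma castAdd_ne_natAdd (i j : Fin m) : Fin.castAdd m i ≠ Fin.natAdd m j := by
  intro h
  have := congrArg Fin.val h
  simp only [Fin.coe_castAdd, Fin.coe_natAdd] at this
  omega

private lemma natAdd_injective {i j : Fin m} (h : Fin.natAdd m i = Fin.natAdd m j) : i = j := by
  have := congrArg Fin.val h
  simp only [Fin.coe_natAdd] at this
  exact Fin.ext (by omega)

private lemma castAdd_injective {i j : Fin m} (h : Fin.castAdd m i = Fin.castAdd m j) : i = j := by
  have := congrArg Fin.val h
  simp only [Fin.coe_castAdd] at this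
  exact Fin.ext this

private lemma bswap_comm (m : ℕ) :
    ((Finset.univ : Finset (Fin m)) : Set (Fin m)).Pairwise fun i j =>
      Commute (Equiv.swap (Fin.castAdd m i) (Fin.natAdd m i))
        (Equiv.swap (Fin.castAdd m j) (Fin.natAdd m j)) := by
  intro i _ j _ hij
  apply Equiv.Perm.Disjoint.commute
  intro z
  by_cases h1 : z = Fin.castAdd m i
  · right
    subst h1
    exact Equiv.swap_apply_of_ne_of_ne (fun h => hij (castAdd_injective h))
      (castAdd_ne_natAdd _ _)
  by_cases h2 : z = Fin.natAdd m i
  · right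
    subst h2
    exact Equiv.swap_apply_of_ne_of_ne (Ne.symm (castAdd_ne_natAdd _ _))
      (fun h => hij (natAdd_injective h))
  · left
    exact Equiv.swap_apply_of_ne_of_ne h1 h2

private lemma bswap_aux (S : Finset (Fin m)) :
    ∀ j : Fin m,
      (S.noncommProd (fun i : Fin m => Equiv.swap (Fin.castAdd m i) (Fin.natAdd m i))
        ((bswap_comm m).mono (Finset.coe_subset.2 (Finset.subset_univ S))) (Fin.castAdd m j)
          = if j ∈ S then Fin.natAdd m j else Fin.castAdd m j) ∧
      (S.noncommProd (fun i : Fin m => Equiv.swap (Fin.castAdd m i) (Fin.natAdd m i))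
        ((bswap_comm m).mono (Finset.coe_subset.2 (Finset.subset_univ S))) (Fin.natAdd m j)
          = if j ∈ S then Fin.castAdd m j else Fin.natAdd m j) := by
  classical
  induction S using Finset.induction_on with
  | empty =>
    simp
    exact fun j => ⟨rfl, rfl⟩
  | @insert a S ha IH =>
    intro j
    rw [Finset.noncommProd_insert_of_notMem _ _ _ _ ha]
    simp only [Equiv.Perm.mul_apply]
    obtain ⟨h1, h2⟩ := IH j
    constructor
    · rw [h1]
      by_cases hjS : j ∈ S
      · have hja : j ≠ a := fun h => ha (h ▸ hjS)
        rw [if_pos hjS, if_pos (Finset.mem_insert_of_mem hjS)]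
        exact Equiv.swap_apply_of_ne_of_ne (Ne.symm (castAdd_ne_natAdd _ _))
          (fun h => hja (natAdd_injective h))
      · rw [if_neg hjS]
        by_cases hja : j = a
        · subst hja
          rw [if_pos (Finset.mem_insert_self j S), Equiv.swap_apply_left]
        · rw [if_neg (by simp [hja, hjS])]
          exact Equiv.swap_apply_of_ne_of_ne
            (fun h => hja (castAdd_injective h)) (castAdd_ne_natAdd _ _)
    · rw [h2]
      by_cases hjS : j ∈ S
      · have hja : j ≠ a := fun h => ha (h ▸ hjS)
        rw [if_pos hjS, if_pos (Finset.mem_insert_of_mem hjS)]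
        exact Equiv.swap_apply_of_ne_of_ne
          (fun h => hja (castAdd_injective h)) (castAdd_ne_natAdd _ _)
      · rw [if_neg hjS]
        by_cases hja : j = a
        · subst hja
          rw [if_pos (Finset.mem_insert_self j S), Equiv.swap_apply_right]
        · rw [if_neg (by simp [hja, hjS])]
          exact Equiv.swap_apply_of_ne_of_ne (Ne.symm (castAdd_ne_natAdd _ _))
            (fun h => hja (natAdd_injective h))

private def bswap (m : ℕ) : Equiv.Perm (Fin (m + m)) :=
  Finset.univ.noncommProd
    (fun i : Fin m => Equiv.swap (Fin.castAdd m i) (Fin.natAdd m i))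
    ((bswap_comm m).mono (Finset.coe_subset.2 (Finset.subset_univ _)))

private lemma bswap_castAdd (j : Fin m) : bswap m (Fin.castAdd m j) = Fin.natAdd m j := by
  have := (bswap_aux (Finset.univ : Finset (Fin m)) j).1
  rw [if_pos (Finset.mem_univ j)] at this
  exact this

private lemma bswap_natAdd (j : Fin m) : bswap m (Fin.natAdd m j) = Fin.castAdd m j := by
  have := (bswap_aux (Finset.univ : Finset (Fin m)) j).2
  rw [if_pos (Finset.mem_univ j)] at this
  exact this

private lemma bswap_sign : Equiv.Perm.sign (bswap m) = (-1) ^ m := by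
  rw [bswap, Finset.map_noncommProd _ _ _ (Equiv.Perm.sign), Finset.noncommProd_eq_prod]
  rw [Finset.prod_congr rfl fun i _ => Equiv.Perm.sign_swap (castAdd_ne_natAdd i i)]
  simp

variable {M : Type} [AddCommGroup M] [Module ℂ M]

private lemma blockswap (f : AlternatingMap ℂ M ℂ (Fin (m + m))) (v w : Fin m → M) :
    f (Fin.addCases (motive := fun _ => M) w v)
      = (-1 : ℂ) ^ m * f (Fin.addCases (motive := fun _ => M) v w) := by
  have h : (Fin.addCases (motive := fun _ => M) v w) ∘ (bswap m)
      = Fin.addCases (motive := fun _ => M) w v := by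
    funext z
    induction z using Fin.addCases with
    | left j =>
      rw [Function.comp_apply, bswap_castAdd, Fin.addCases_right, Fin.addCases_left]
    | right j =>
      rw [Function.comp_apply, bswap_natAdd, Fin.addCases_left, Fin.addCases_right]
  calc f (Fin.addCases (motive := fun _ => M) w v)
      = f ((Fin.addCases (motive := fun _ => M) v w) ∘ (bswap m)) := by rw [h]
    _ = Equiv.Perm.sign (bswap m) • f (Fin.addCases (motive := fun _ => M) v w) :=
        f.map_perm _ _
    _ = (-1 : ℂ) ^ m * f (Fin.addCases (motive := fun _ => M) v w) := by
        rw [bswap_sign]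
        rcases Nat.even_or_odd m with hm | hm
        · rw [hm.neg_one_pow, hm.neg_one_pow, one_smul, one_mul]
        · rw [hm.neg_one_pow, hm.neg_one_pow, neg_one_mul]
          simp [Units.smul_def]

private lemma blockscale (f : AlternatingMap ℂ M ℂ (Fin (m + m))) (v w : Fin m → M) (c : ℂ) :
    f (Fin.addCases (motive := fun _ => M) v (fun i => c • w i))
      = c ^ m * f (Fin.addCases (motive := fun _ => M) v w) := by
  have h := f.toMultilinearMap.map_smul_univ
    (Fin.addCases (motive := fun _ => ℂ) (fun _ => 1) (fun _ => c))
    (Fin.addCases (motive := fun _ => M) v w)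
  have e : (fun i => Fin.addCases (motive := fun _ => ℂ) (fun _ => (1:ℂ)) (fun _ => c) i •
      Fin.addCases (motive := fun _ => M) v w i)
      = Fin.addCases (motive := fun _ => M) v (fun i => c • w i) := by
    funext z
    induction z using Fin.addCases with
    | left j =>
      rw [Fin.addCases_left, Fin.addCases_left, Fin.addCases_left, one_smul]
    | right j =>
      rw [Fin.addCases_right, Fin.addCases_right, Fin.addCases_right]
  have p : (∏ i : Fin (m + m), Fin.addCases (motive := fun _ => ℂ) (fun _ => (1:ℂ)) (fun _ => c) i)
      = c ^ m := by
    rw [Fin.prod_univ_add,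
      show (∏ i : Fin m, Fin.addCases (motive := fun _ => ℂ)
          (fun _ => (1:ℂ)) (fun _ => c) (Fin.castAdd m i)) = 1 from
        Finset.prod_eq_one fun i _ => Fin.addCases_left i,
      show (∏ i : Fin m, Fin.addCases (motive := fun _ => ℂ)
          (fun _ => (1:ℂ)) (fun _ => c) (Fin.natAdd m i)) = c ^ m from by
        rw [Finset.prod_congr rfl fun i _ => Fin.addCases_right i]; simp,
      one_mul]
  rw [e, p] at h
  simpa [smul_eq_mul] using h

private lemma addCases_update (v : Fin m → M) (r : Fin m → M) (a : Fin m) (y : M) :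
    Fin.addCases (motive := fun _ => M) v (Function.update r a y)
      = Function.update (Fin.addCases (motive := fun _ => M) v r) (Fin.natAdd m a) y := by
  classical
  funext z
  induction z using Fin.addCases with
  | left j =>
    rw [Fin.addCases_left, Function.update_apply, if_neg (castAdd_ne_natAdd j a),
      Fin.addCases_left]
  | right j =>
    rw [Fin.addCases_right, Function.update_apply, Function.update_apply, Fin.addCases_right]
    by_cases h : j = a
    · subst h
      rw [if_pos rfl, if_pos rfl]
    · rw [if_neg h, if_neg (fun hh => h (natAdd_injective hh))]

private lemma replace (f : AlternatingMap ℂ M ℂ (Fin (m + m))) (v g h : Fin m → M)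
    (hd : ∀ i, g i - h i ∈ Submodule.span ℂ (Set.range v)) :
    f (Fin.addCases (motive := fun _ => M) v g)
      = f (Fin.addCases (motive := fun _ => M) v h) := by
  classical
  have key : ∀ S : Finset (Fin m),
      f (Fin.addCases (motive := fun _ => M) v (fun i => if i ∈ S then g i else h i))
        = f (Fin.addCases (motive := fun _ => M) v h) := by
    intro S
    induction S using Finset.induction_on with
    | empty => simp
    | @insert a S ha IH =>
      have e1 : (fun i => if i ∈ insert a S then g i else h i)
          = Function.update (fun i => if i ∈ S then g i else h i) a (g a) := by
        funext i
        by_cases hia : i = a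
        · subst hia; simp
        · rw [Function.update_apply, if_neg hia]
          simp [Finset.mem_insert, hia]
      have e2 : Function.update (fun i => if i ∈ S then g i else h i) a (h a)
          = fun i => if i ∈ S then g i else h i := by
        apply Function.update_eq_self_iff.2
        simp [ha]
      rw [e1, addCases_update]
      have hz : f (Function.update (Fin.addCases (motive := fun _ => M) v
          (fun i => if i ∈ S then g i else h i)) (Fin.natAdd m a) (g a - h a)) = 0 := by
        refine f.map_linearDependent _ fun hli => ?_
        have hmem : g a - h a ∈ Submodule.span ℂ
            ((Function.update (Fin.addCases (motive := fun _ => M) v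
              (fun i => if i ∈ S then g i else h i)) (Fin.natAdd m a) (g a - h a)) ''
              {z | z ≠ Fin.natAdd m a}) := by
          refine Submodule.span_mono ?_ (hd a)
          rintro _ ⟨j, rfl⟩
          exact ⟨Fin.castAdd m j, castAdd_ne_natAdd j a, by
            rw [Function.update_apply, if_neg (castAdd_ne_natAdd j a), Fin.addCases_left]⟩
        have hnot := hli.notMem_span_image (s := {z | z ≠ Fin.natAdd m a})
          (x := Fin.natAdd m a) (by simp)
        rw [Function.update_self] at hnot
        exact hnot hmem
      have hsub := f.map_update_sub (Fin.addCases (motive := fun _ => M) v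
          (fun i => if i ∈ S then g i else h i)) (Fin.natAdd m a) (g a) (h a)
      rw [hz] at hsub
      have e3 : f (Function.update (Fin.addCases (motive := fun _ => M) v
          (fun i => if i ∈ S then g i else h i)) (Fin.natAdd m a) (g a))
          = f (Function.update (Fin.addCases (motive := fun _ => M) v
          (fun i => if i ∈ S then g i else h i)) (Fin.natAdd m a) (h a)) := by
        linear_combination -hsub
      rw [e3, ← addCases_update, e2]
      exact IH
  have := key Finset.univ
  simpa using this

end Aux

/-- If `0 → V →a' T →b V → 0` has torsion 1, `b ∘ a = λ·id`, `b' ∘ a' = −λ·id` with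
`λ ≠ 0`, and `0 → V →a T →b' V → 0` is exact, then the latter sequence also has
torsion 1. -/
theorem torsion_reversed_sequence_one
    (V T : Type)
    [AddCommGroup V] [Module ℂ V] [FiniteDimensional ℂ V]
    [AddCommGroup T] [Module ℂ T] [FiniteDimensional ℂ T]
    (m : ℕ) (hV : Module.finrank ℂ V = m) (hT : Module.finrank ℂ T = 2 * m)
    (Sf : AlternatingMap ℂ V ℂ (Fin m)) (hSf : Sf ≠ 0)
    (Om : AlternatingMap ℂ T ℂ (Fin (m + m))) (hOm : Om ≠ 0)
    (lam : ℂ) (hlam : lam ≠ 0)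
    (a a' : V →ₗ[ℂ] T) (b b' : T →ₗ[ℂ] V)
    (hba : b.comp a = lam • LinearMap.id)
    (hb'a' : b'.comp a' = (-lam) • LinearMap.id)
    -- exactness of 0 → V →a' T →b V → 0
    (ha' : Function.Injective a') (hb : Function.Surjective b)
    (ha'b : LinearMap.range a' = LinearMap.ker b)
    -- torsion 1 of 0 → V →a' T →b V → 0
    (htor : ∀ (x : Module.Basis (Fin m) ℂ V), Sf ⇑x = 1 →
      ∀ t : Fin m → T, (∀ i, b (t i) = x i) →
        Om (fun i => Fin.addCases (fun j => a' (x j)) t i) = 1)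
    -- exactness of 0 → V →a T →b' V → 0
    (ha : Function.Injective a) (hb' : Function.Surjective b')
    (hab' : LinearMap.range a = LinearMap.ker b') :
    ∀ (x : Module.Basis (Fin m) ℂ V), Sf ⇑x = 1 →
      ∀ s : Fin m → T, (∀ i, b' (s i) = x i) →
        Om (fun i => Fin.addCases (fun j => a (x j)) s i) = 1 := by
  intro x hx s hs
  have hbav : ∀ v : V, b (a v) = lam • v := fun v => by
    have := LinearMap.ext_iff.1 hba v
    simpa using this
  have hb'a'v : ∀ v : V, b' (a' v) = -(lam • v) := fun v => by
    have := LinearMap.ext_iff.1 hb'a' v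
    simpa [neg_smul] using this
  -- decompose s
  have key : ∀ i, ∃ c : V, s i = a c + (-lam⁻¹) • a' (x i) := by
    intro i
    have hker : s i - (-lam⁻¹) • a' (x i) ∈ LinearMap.ker b' := by
      rw [LinearMap.mem_ker, map_sub, map_smul, hs i, hb'a'v]
      have : (-lam⁻¹) • -(lam • x i) = x i := by
        rw [smul_neg, neg_smul, neg_neg, smul_smul, inv_mul_cancel₀ hlam, one_smul]
      rw [this, sub_self]
    rw [← hab'] at hker
    obtain ⟨c, hc⟩ := hker
    exact ⟨c, by rw [hc]; abel⟩
  choose c hc using key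
  -- Om of the first-sequence block family
  have h1 : Om (Fin.addCases (motive := fun _ => T)
      (fun j => a' (x j)) (fun j => a (x j))) = lam ^ m := by
    have ht : ∀ i, b ((fun i => lam⁻¹ • a (x i)) i) = x i := fun i => by
      rw [map_smul, hbav, smul_smul, inv_mul_cancel₀ hlam, one_smul]
    have h2 : Om (Fin.addCases (motive := fun _ => T)
        (fun j => a' (x j)) (fun i => lam⁻¹ • a (x i))) = 1 :=
      htor x hx (fun i => lam⁻¹ • a (x i)) ht
    rw [blockscale Om (fun j => a' (x j)) (fun j => a (x j)) lam⁻¹] at h2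
    have hpow : (lam : ℂ) ^ m ≠ 0 := pow_ne_zero _ hlam
    field_simp at h2
    rw [one_div, inv_pow, inv_mul_eq_iff_eq_mul₀ hpow, mul_one] at h2
    exact h2
  -- replace s by its a'-part
  have hspan : ∀ i, s i - (-lam⁻¹) • a' (x i)
      ∈ Submodule.span ℂ (Set.range fun j => a (x j)) := by
    intro i
    have hsp : Submodule.span ℂ (Set.range fun j => a (x j)) = Submodule.map a ⊤ := by
      rw [← x.span_eq, Submodule.map_span, ← Set.range_comp]
      rfl
    rw [hsp]
    refine ⟨c i, trivial, ?_⟩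
    rw [hc i]; abel
  show Om (Fin.addCases (motive := fun _ => T) (fun j => a (x j)) s) = 1
  rw [replace Om (fun j => a (x j)) s (fun i => (-lam⁻¹) • a' (x i)) hspan,
    blockscale Om (fun j => a (x j)) (fun j => a' (x j)) (-lam⁻¹),
    blockswap Om (fun j => a' (x j)) (fun j => a (x j)), h1,
    ← mul_assoc, ← mul_pow, ← mul_pow,
    show (-lam⁻¹ * -1 : ℂ) = lam⁻¹ by ring, inv_mul_cancel₀ hlam, one_pow]
end

section
/- Let G = SL(n+1,ℂ), U the upper unitriangular subgroup, Ū the lower unitriangular subgroup. Let x = diag(λ_0,…,λ_n) with λ_{k−1} ≠ λ_k, let u ∈ U be any element with u x u^{-1} equal to the matrix with diagonal (λ_0,…,λ_n), superdiagonal all 1's, and zeros elsewhere. Define W_k as the identity except the 2×2 block ((0,(λ_k−λ_{k−1})^{-1}),(λ_{k−1}−λ_k,0)) in rows/columns k−1,k, and n_k ∈ Ū as the identity except the 2×2 block ((1,0),(λ_k−λ_{k−1},1)) in the same rows/columns. Then W_k u^{-1} n_k u ∈ U. -/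
private lemma sum_pair_aux {β} [AddCommMonoid β] {m : ℕ} (a b : Fin m) (hab : a ≠ b)
    (f : Fin m → β) (h : ∀ c, c ≠ a → c ≠ b → f c = 0) : ∑ c, f c = f a + f b := by
  rw [← Finset.sum_pair hab]
  refine (Finset.sum_subset (Finset.subset_univ _) (fun c _ hc => ?_)).symm
  simp only [Finset.mem_insert, Finset.mem_singleton, not_or] at hc
  exact h c hc.1 hc.2

/-- `W_k u⁻¹ n_k u` lies in the upper unitriangular subgroup `U` of `SL(n+1,ℂ)`,
where `u ∈ U` conjugates the regular diagonal matrix `x` to its companion-like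
normal form `y` (diagonal `λ_i`, superdiagonal 1's), `W_k` is the reflection
matrix and `n_k ∈ Ū` the lower unitriangular correction. -/
theorem Wk_uinv_nk_u_mem_U
    (n : ℕ) (lam : Fin (n + 1) → ℂ)
    (k : Fin n) (hk : lam k.castSucc ≠ lam k.succ)
    (x y u W N : Matrix (Fin (n + 1)) (Fin (n + 1)) ℂ)
    (hx : x = Matrix.diagonal lam)
    (hy : ∀ i j, y i j =
      if i = j then lam i else if (i : ℕ) + 1 = (j : ℕ) then 1 else 0)
    -- u is upper unitriangular
    (hu_diag : ∀ i, u i i = 1) (hu_low : ∀ i j : Fin (n + 1), j < i → u i j = 0)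
    -- u conjugates x to y
    (huxu : u * x * u⁻¹ = y)
    (hW : ∀ i j, W i j =
      if i = k.castSucc then
        (if j = k.succ then (lam k.succ - lam k.castSucc)⁻¹ else 0)
      else if i = k.succ then
        (if j = k.castSucc then lam k.castSucc - lam k.succ else 0)
      else if i = j then 1 else 0)
    -- n_k is the identity except the block ((1,0),(λ_k−λ_{k−1},1))
    (hN : ∀ i j, N i j =
      if i = k.succ ∧ j = k.castSucc then lam k.succ - lam k.castSucc
      else if i = j then 1 else 0) :
    (∀ i, (W * u⁻¹ * N * u) i i = 1) ∧
      ∀ i j : Fin (n + 1), j < i → (W * u⁻¹ * N * u) i j = 0 := by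
  set kc := k.castSucc with hkc
  set ks := k.succ with hks
  set a := lam ks - lam kc with ha_def
  have ha : a ≠ 0 := sub_ne_zero_of_ne (Ne.symm hk)
  have hkcks_nat : (kc : ℕ) + 1 = (ks : ℕ) := by simp [hkc, hks]
  have hlt : kc < ks := by rw [Fin.lt_def]; omega
  have hne : kc ≠ ks := ne_of_lt hlt
  -- u is upper triangular
  have hut : u.BlockTriangular id := fun i j hij => hu_low i j hij
  have hdet : IsUnit u.det := by
    rw [Matrix.det_of_upperTriangular hut]; simp [hu_diag]
  haveI : Invertible u := u.invertibleOfIsUnitDet hdet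
  set v := u⁻¹ with hv_def
  have huv : u * v = 1 := Matrix.mul_nonsing_inv u hdet
  have hvu : v * u = 1 := Matrix.nonsing_inv_mul u hdet
  -- v is upper triangular
  have hvt : v.BlockTriangular id := Matrix.blockTriangular_inv_of_blockTriangular hut
  have hv_low : ∀ i j : Fin (n + 1), j < i → v i j = 0 := fun i j hij => hvt hij
  -- v has unit diagonal
  have hv_diag : ∀ i, v i i = 1 := by
    intro i
    have h1 : (u * v) i i = 1 := by rw [huv]; simp
    rw [Matrix.mul_apply] at h1
    rw [Finset.sum_eq_single i] at h1
    · rw [hu_diag, one_mul] at h1; exact h1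
    · intro c _ hc
      rcases lt_or_gt_of_ne hc with h | h
      · rw [hu_low i c h, zero_mul]
      · rw [hv_low c i h, mul_zero]
    · intro h; exact absurd (Finset.mem_univ i) h
  -- u kc ks = a⁻¹
  have hux : u * x = y * u := by
    have := congrArg (· * u) huxu
    simpa only [mul_assoc, hvu, mul_one] using this
  have hu_sup : u kc ks = a⁻¹ := by
    have h1 := congrFun (congrFun hux kc) ks
    rw [hx, Matrix.mul_diagonal, Matrix.mul_apply] at h1
    rw [sum_pair_aux kc ks hne _ (fun c hc1 hc2 => ?_)] at h1
    · rw [hy, hy, if_pos rfl, if_neg hne, if_pos hkcks_nat, one_mul, hu_diag] at h1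
      refine eq_inv_of_mul_eq_one_left ?_
      rw [ha_def, mul_sub]
      rw [mul_comm] at h1
      linear_combination h1
    · rw [hy, if_neg (Ne.symm hc1)]
      have : ¬((kc : ℕ) + 1 = (c : ℕ)) := by
        intro h; exact hc2 (Fin.ext (by omega))
      rw [if_neg this, zero_mul]
  -- v kc ks = -a⁻¹
  have hv_sup : v kc ks = -a⁻¹ := by
    have h1 : (u * v) kc ks = 0 := by rw [huv]; exact Matrix.one_apply_ne hne
    rw [Matrix.mul_apply] at h1
    rw [sum_pair_aux kc ks hne _ (fun c hc1 hc2 => ?_)] at h1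
    · rw [hu_diag, one_mul, hu_sup, hv_diag, mul_one] at h1
      linear_combination h1
    · rcases lt_or_gt_of_ne hc1 with h | h
      · rw [hu_low kc c h, zero_mul]
      · have : ks < c := by
          have h' := Fin.lt_def.mp h
          have h2 := Fin.val_ne_of_ne hc2
          exact Fin.lt_def.mpr (by omega)
        rw [hv_low c ks this, mul_zero]
  -- formula for N * u
  have hNu : ∀ l j, (N * u) l j = u l j + (if l = ks then a * u kc j else 0) := by
    intro l j
    rw [Matrix.mul_apply]
    by_cases hl : l = ks
    · subst hl
      rw [if_pos rfl]
      rw [sum_pair_aux kc ks hne _ (fun c hc1 hc2 => ?_)]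
      · rw [hN, hN, if_pos (And.intro rfl rfl), if_neg (fun h => hne h.2.symm),
          if_pos rfl, one_mul]
        ring
      · rw [hN, if_neg (fun h => hc1 h.2), if_neg (fun h => hc2 h.symm), zero_mul]
    · rw [if_neg hl, add_zero]
      rw [Finset.sum_eq_single l]
      · rw [hN, if_neg (fun h => hl h.1), if_pos rfl, one_mul]
      · intro c _ hc
        rw [hN]
        have : ¬(l = ks ∧ c = kc) := fun h => hl h.1
        rw [if_neg this, if_neg (Ne.symm hc), zero_mul]
      · intro h; exact absurd (Finset.mem_univ l) h
  -- formula for M := v * (N * u)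
  have hM : ∀ i j, (v * (N * u)) i j =
      (if i = j then 1 else 0) + a * v i ks * u kc j := by
    intro i j
    rw [Matrix.mul_apply]
    have : ∀ l, v i l * (N * u) l j =
        v i l * u l j + (if l = ks then v i ks * (a * u kc j) else 0) := by
      intro l
      rw [hNu, mul_add]
      congr 1
      by_cases hl : l = ks
      · subst hl; rw [if_pos rfl, if_pos rfl]
      · rw [if_neg hl, if_neg hl, mul_zero]
    simp_rw [this]
    rw [Finset.sum_add_distrib, Finset.sum_ite_eq' Finset.univ ks]
    have hvuij : ∑ l, v i l * u l j = (if i = j then 1 else 0) := by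
      rw [← Matrix.mul_apply, hvu, Matrix.one_apply]
    rw [hvuij, if_pos (Finset.mem_univ ks)]
    ring
  -- formula for the full product by rows of W
  have hP : ∀ i j, (W * u⁻¹ * N * u) i j =
      if i = kc then a⁻¹ * (v * (N * u)) ks j
      else if i = ks then (-a) * (v * (N * u)) kc j
      else (v * (N * u)) i j := by
    intro i j
    have hassoc : W * u⁻¹ * N * u = W * (v * (N * u)) := by
      rw [hv_def]; simp only [mul_assoc]
    rw [hassoc, Matrix.mul_apply]
    by_cases hi : i = kc
    · subst hi
      rw [if_pos rfl, Finset.sum_eq_single ks]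
      · rw [hW, if_pos rfl, if_pos rfl, ha_def]
      · intro c _ hc
        rw [hW, if_pos rfl, if_neg hc, zero_mul]
      · intro h; exact absurd (Finset.mem_univ ks) h
    · rw [if_neg hi]
      by_cases hi2 : i = ks
      · subst hi2
        rw [if_pos rfl, Finset.sum_eq_single kc]
        · rw [hW, if_neg hi, if_pos rfl, if_pos rfl, ha_def]; ring
        · intro c _ hc
          rw [hW, if_neg hi, if_pos rfl, if_neg hc, zero_mul]
        · intro h; exact absurd (Finset.mem_univ kc) h
      · rw [if_neg hi2, Finset.sum_eq_single i]
        · rw [hW, if_neg hi, if_neg hi2, if_pos rfl, one_mul]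
        · intro c _ hc
          rw [hW, if_neg hi, if_neg hi2, if_neg (Ne.symm hc), zero_mul]
        · intro h; exact absurd (Finset.mem_univ i) h
  constructor
  · -- diagonal entries
    intro i
    rw [hP]
    by_cases hi : i = kc
    · subst hi
      rw [if_pos rfl, hM, if_neg (Ne.symm hne), hv_diag, hu_diag]
      field_simp
      ring
    · rw [if_neg hi]
      by_cases hi2 : i = ks
      · subst hi2
        rw [if_pos rfl, hM, if_neg hne, hv_sup, hu_sup]
        field_simp
        ring
      · rw [if_neg hi2, hM, if_pos rfl]
        have : v i ks * u kc i = 0 := by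
          have hi' := Fin.val_ne_of_ne hi
          have hi2' := Fin.val_ne_of_ne hi2
          rcases lt_or_gt_of_ne hi' with h | h
          · rw [hu_low kc i (by rwa [Fin.lt_def]), mul_zero]
          · rcases lt_or_gt_of_ne hi2' with h2 | h2
            · omega
            · rw [hv_low i ks (by rwa [Fin.lt_def]), zero_mul]
        rw [mul_assoc, this, mul_zero, add_zero]
  · -- strictly lower entries
    intro i j hji
    rw [hP]
    by_cases hi : i = kc
    · subst hi
      rw [if_pos rfl, hM]
      have hjks : j ≠ ks := ne_of_lt (lt_trans hji hlt)
      rw [if_neg (fun h => hjks h.symm), hv_diag, hu_low kc j hji]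
      ring
    · rw [if_neg hi]
      by_cases hi2 : i = ks
      · subst hi2
        rw [if_pos rfl, hM, hv_sup]
        by_cases hj : j = kc
        · subst hj
          rw [if_pos rfl, hu_diag]
          field_simp
          ring
        · have hjkc : j < kc := by
            rw [Fin.lt_def] at hji ⊢
            have := Fin.val_ne_of_ne hj
            omega
          rw [if_neg (fun h => hj h.symm), hu_low kc j hjkc]
          ring
      · rw [if_neg hi2, hM, if_neg (Ne.symm (ne_of_lt hji))]
        have : v i ks * u kc j = 0 := by
          have hi' := Fin.val_ne_of_ne hi
          have hi2' := Fin.val_ne_of_ne hi2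
          rw [Fin.lt_def] at hji
          rcases lt_or_gt_of_ne hi2' with h2 | h2
          · -- i < ks, so i ≤ kc, i ≠ kc so i < kc, so j < kc
            have : j < kc := by rw [Fin.lt_def]; omega
            rw [hu_low kc j this, mul_zero]
          · rw [hv_low i ks (by rwa [Fin.lt_def]), zero_mul]
        rw [mul_assoc, this, mul_zero]
        ring
end
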